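/- Let N, D ≥ 1, let R > 1, and let W, W_V ∈ ℝ^{D×D} and X, X̃ ∈ ℝ^{N×D} be matrices satisfying ‖W‖ ≤ R, ‖W_V‖ ≤ R, ‖X‖ ≤ R, and ‖X̃‖ ≤ R in spectral norm. Define the self-attention map F(X) = D(X)^{-1} · A(X) · X W_V, where A(X) ∈ ℝ^{N×N} has entries A(X)_{i,j} = exp((X W Xᵀ)_{i,j}) and D(X) ∈ ℝ^{N×N} is the diagonal matrix whose i-th diagonal entry is Σ_{j=1}^N A(X)_{i,j}. Then the self-attention map is Lipschitz in spectral norm on this ball: ‖F(X) − F(X̃)‖ ≤ 5 R⁴ N D · ‖X − X̃‖. -/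

import Mathlib

/-!
Write `F(X) = P(X) · X W_V`, where `P(X)` is the row-wise softmax of the logits `X W Xᵀ`;
then `F(X) - F(X̃) = (P - P̃) · X W_V + P̃ · (X - X̃) W_V`. The logits move entrywise by at
most `ε = 2 R² ‖X - X̃‖`. By `|eᵃ - eᵇ| ≤ |a - b| (eᵃ + eᵇ) / 2`, each softmax entry then moves
by at most `ε` times the sum of the two entries, so every row of `P - P̃` has `ℓ¹`-norm at most
`2ε`, while the rows of `P̃` have `ℓ¹`-norm `1`. A matrix with `N` rows of `ℓ¹`-norm at most `c`
has spectral norm at most `√N c`, which gives `‖F(X) - F(X̃)‖ ≤ √N (4 R⁴ + R) ‖X - X̃‖`.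
-/

noncomputable def specNorm {m n : ℕ} (A : Matrix (Fin m) (Fin n) ℝ) : ℝ :=
  ‖LinearMap.toContinuousLinearMap (Matrix.toEuclideanLin A)‖

/-- Self-attention: `F(X) = D(X)⁻¹ · A(X) · (X · W_V)` with `A(X)ᵢⱼ = exp((X W Xᵀ)ᵢⱼ)`
and `D(X)` the diagonal matrix of row sums of `A(X)`. -/
noncomputable def attn {N D : ℕ} (W WV : Matrix (Fin D) (Fin D) ℝ)
    (X : Matrix (Fin N) (Fin D) ℝ) : Matrix (Fin N) (Fin D) ℝ :=
  (Matrix.diagonal fun i => ∑ j, Real.exp ((X * W * X.transpose) i j))⁻¹ *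
    (Matrix.of fun i j => Real.exp ((X * W * X.transpose) i j)) * (X * WV)

open scoped Matrix.Norms.L2Operator
open Finset Real

lemma exp_sub_one_le_mul_exp_add_one_div_two {t : ℝ} (ht : 0 ≤ t) :
    exp t - 1 ≤ t * (exp t + 1) / 2 := by
  let g : ℝ → ℝ := fun s => s * (exp s + 1) / 2 - (exp s - 1)
  have hg : ∀ s, HasDerivAt g ((1 - (1 - s) * exp s) / 2) s := fun s => by
    refine ((((hasDerivAt_id' s).mul ((hasDerivAt_exp s).add_const 1)).div_const 2).sub
      ((hasDerivAt_exp s).sub_const 1)).congr_deriv ?_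
    ring
  have hg' : ∀ s, 0 ≤ (1 - (1 - s) * exp s) / 2 := fun s => by
    have h := mul_le_mul_of_nonneg_right (add_one_le_exp (-s)) (exp_pos s).le
    rw [← exp_add, neg_add_cancel, exp_zero] at h
    linarith
  have hmono : MonotoneOn g (Set.Ici 0) :=
    monotoneOn_of_deriv_nonneg (convex_Ici 0) (by fun_prop : Continuous g).continuousOn
      (fun s _ => (hg s).differentiableAt.differentiableWithinAt)
      fun s _ => (hg s).deriv ▸ hg' s
  simpa [g] using hmono Set.self_mem_Ici ht ht

lemma abs_exp_sub_exp_le (a b : ℝ) : |exp a - exp b| ≤ |a - b| * (exp a + exp b) / 2 := by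
  wlog hab : b ≤ a generalizing a b
  · rw [abs_sub_comm, abs_sub_comm a, add_comm]
    exact this b a (le_of_not_ge hab)
  rw [abs_of_nonneg (sub_nonneg.mpr (exp_le_exp.mpr hab)), abs_of_nonneg (sub_nonneg.mpr hab)]
  calc exp a - exp b = exp b * (exp (a - b) - 1) := by rw [exp_sub]; field_simp
    _ ≤ exp b * ((a - b) * (exp (a - b) + 1) / 2) := by
      gcongr; exact exp_sub_one_le_mul_exp_add_one_div_two (sub_nonneg.mpr hab)
    _ = (a - b) * (exp a + exp b) / 2 := by rw [exp_sub]; field_simp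

namespace Matrix

variable {m n k : Type*} [Fintype n]

noncomputable def rowSoftmax (S : Matrix m n ℝ) : Matrix m n ℝ :=
  of fun i j => exp (S i j) / ∑ k, exp (S i k)

lemma rowSoftmax_nonneg (S : Matrix m n ℝ) (i : m) (j : n) : 0 ≤ rowSoftmax S i j :=
  div_nonneg (exp_pos _).le (sum_nonneg fun _ _ => (exp_pos _).le)

lemma sum_rowSoftmax_apply [Nonempty n] (S : Matrix m n ℝ) (i : m) :
    ∑ j, rowSoftmax S i j = 1 := by
  simp only [rowSoftmax, of_apply, ← sum_div]
  exact div_self (sum_pos (fun _ _ => exp_pos _) univ_nonempty).ne'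

lemma abs_rowSoftmax_sub_le {S T : Matrix m n ℝ} {ε : ℝ} (h : ∀ i j, |S i j - T i j| ≤ ε)
    (i : m) (j : n) :
    |rowSoftmax S i j - rowSoftmax T i j| ≤ ε * (rowSoftmax S i j + rowSoftmax T i j) := by
  have hd : 0 < ∑ k, exp (S i k) := sum_pos (fun _ _ => exp_pos _) ⟨j, mem_univ _⟩
  have he : 0 < ∑ k, exp (T i k) := sum_pos (fun _ _ => exp_pos _) ⟨j, mem_univ _⟩
  -- Over the common denominator the numerator is `∑ k, (e^(S i j + T i k) - e^(T i j + S i k))`,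
  -- and the two exponents in each term differ by at most `2ε`.
  have hnum : |exp (S i j) * ∑ k, exp (T i k) - exp (T i j) * ∑ k, exp (S i k)|
      ≤ ε * (exp (S i j) * ∑ k, exp (T i k) + exp (T i j) * ∑ k, exp (S i k)) := by
    simp only [mul_sum, ← exp_add, ← sum_sub_distrib, ← sum_add_distrib]
    refine (abs_sum_le_sum_abs _ _).trans (sum_le_sum fun k _ => ?_)
    calc _ ≤ |(S i j + T i k) - (T i j + S i k)|
          * (exp (S i j + T i k) + exp (T i j + S i k)) / 2 := abs_exp_sub_exp_le _ _
      _ ≤ (2 * ε) * (exp (S i j + T i k) + exp (T i j + S i k)) / 2 := by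
        gcongr
        rw [show (S i j + T i k) - (T i j + S i k) = (S i j - T i j) - (S i k - T i k) by ring]
        exact (abs_sub _ _).trans (by linarith [h i j, h i k])
      _ = _ := by ring
  simp only [rowSoftmax, of_apply]
  rw [div_sub_div _ _ hd.ne' he.ne', abs_div,
    abs_of_pos (mul_pos hd he), div_le_iff₀ (mul_pos hd he),
    mul_comm (∑ k, exp (S i k)) (exp (T i j))]
  refine hnum.trans_eq ?_
  field_simp

section L2OpNorm

variable [Fintype m] [Fintype k] [DecidableEq n] [DecidableEq k]

lemma abs_apply_le_l2_opNorm (A : Matrix m n ℝ) (i : m) (j : n) :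
    |A i j| ≤ ‖A‖ := by
  have h := A.l2_opNorm_mulVec (EuclideanSpace.single j 1)
  rw [PiLp.norm_single, norm_one, mul_one] at h
  refine le_trans ?_ (((EuclideanSpace.equiv m ℝ).symm _).norm_apply_le i |>.trans h)
  simp [mulVec_single]

lemma l2_opNorm_le_sqrt_card_mul (A : Matrix m n ℝ) {c : ℝ}
    (hc : ∀ i, ∑ j, |A i j| ≤ c) : ‖A‖ ≤ √(Fintype.card m) * c := by
  have hc0 : 0 ≤ √(Fintype.card m) * c := by
    rcases isEmpty_or_nonempty m with hm | ⟨⟨i⟩⟩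
    · simp
    · exact mul_nonneg (sqrt_nonneg _) ((sum_nonneg fun j _ => abs_nonneg _).trans (hc i))
  rw [l2_opNorm_def]
  refine ContinuousLinearMap.opNorm_le_bound _ hc0 fun x => ?_
  have hrow : ∀ i, |(A *ᵥ x.ofLp) i| ≤ c * ‖x‖ := fun i => calc
    |(A *ᵥ x.ofLp) i| = |∑ j, A i j * x j| := rfl
    _ ≤ ∑ j, |A i j| * ‖x‖ := (abs_sum_le_sum_abs _ _).trans <| sum_le_sum fun j _ => by
      rw [abs_mul]; gcongr; exact x.norm_apply_le j
    _ ≤ c * ‖x‖ := by rw [← sum_mul]; gcongr; exact hc i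
  refine (sq_le_sq₀ (norm_nonneg _) (by positivity)).mp ?_
  rw [EuclideanSpace.norm_sq_eq]
  calc ∑ i, ‖(A *ᵥ x.ofLp) i‖ ^ 2 ≤ ∑ _i : m, (c * ‖x‖) ^ 2 :=
        sum_le_sum fun i _ => by
          rw [Real.norm_eq_abs]; exact pow_le_pow_left₀ (abs_nonneg _) (hrow i) 2
    _ = (√(Fintype.card m) * c * ‖x‖) ^ 2 := by
      rw [sum_const, card_univ, nsmul_eq_mul, mul_pow, mul_pow, mul_pow,
        sq_sqrt (Nat.cast_nonneg _)]
      ring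

lemma l2_opNorm_transpose [DecidableEq m] (A : Matrix m n ℝ) : ‖Aᵀ‖ = ‖A‖ := by
  rw [← conjTranspose_eq_transpose_of_trivial, l2_opNorm_conjTranspose]

lemma l2_opNorm_mul_mul_transpose_sub_le [DecidableEq m] (X Y : Matrix m k ℝ)
    (W : Matrix k k ℝ) :
    ‖X * W * Xᵀ - Y * W * Yᵀ‖ ≤ ‖X - Y‖ * ‖W‖ * (‖X‖ + ‖Y‖) := by
  have hsplit : X * W * Xᵀ - Y * W * Yᵀ = (X - Y) * W * Xᵀ + Y * W * (X - Y)ᵀ := by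
    simp only [Matrix.sub_mul, Matrix.mul_sub, transpose_sub]; abel
  rw [hsplit]
  calc _ ≤ ‖(X - Y) * W * Xᵀ‖ + ‖Y * W * (X - Y)ᵀ‖ := norm_add_le _ _
    _ ≤ ‖X - Y‖ * ‖W‖ * ‖Xᵀ‖ + ‖Y‖ * ‖W‖ * ‖(X - Y)ᵀ‖ := by
      gcongr <;> exact (l2_opNorm_mul _ _).trans (by gcongr; exact l2_opNorm_mul _ _)
    _ = _ := by rw [l2_opNorm_transpose, l2_opNorm_transpose]; ring

lemma l2_opNorm_rowSoftmax_le [Nonempty n] (S : Matrix m n ℝ) :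
    ‖rowSoftmax S‖ ≤ √(Fintype.card m) := by
  simpa using l2_opNorm_le_sqrt_card_mul (rowSoftmax S) (c := 1) fun i => by
    simp only [abs_of_nonneg (rowSoftmax_nonneg S i _), sum_rowSoftmax_apply, le_refl]

lemma l2_opNorm_rowSoftmax_sub_le [Nonempty n] {S T : Matrix m n ℝ} {ε : ℝ}
    (h : ∀ i j, |S i j - T i j| ≤ ε) :
    ‖rowSoftmax S - rowSoftmax T‖ ≤ √(Fintype.card m) * (2 * ε) := by
  refine l2_opNorm_le_sqrt_card_mul _ fun i => ?_
  calc ∑ j, |(rowSoftmax S - rowSoftmax T) i j|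
      ≤ ∑ j, ε * (rowSoftmax S i j + rowSoftmax T i j) :=
        sum_le_sum fun j _ => abs_rowSoftmax_sub_le h i j
    _ = 2 * ε := by
      rw [← mul_sum, sum_add_distrib, sum_rowSoftmax_apply, sum_rowSoftmax_apply]; ring

end L2OpNorm

end Matrix

open Matrix

lemma specNorm_eq_l2_opNorm {m n : ℕ} (A : Matrix (Fin m) (Fin n) ℝ) : specNorm A = ‖A‖ := rfl

lemma attn_eq_rowSoftmax_mul {N D : ℕ} [Nonempty (Fin N)] (W WV : Matrix (Fin D) (Fin D) ℝ)
    (X : Matrix (Fin N) (Fin D) ℝ) : attn W WV X = rowSoftmax (X * W * Xᵀ) * (X * WV) := by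
  set d : Fin N → ℝ := fun i => ∑ j, exp ((X * W * Xᵀ) i j)
  have hd : ∀ i, d i ≠ 0 := fun i => (sum_pos (fun _ _ => exp_pos _) univ_nonempty).ne'
  have hinv : (diagonal d)⁻¹ = diagonal fun i => (d i)⁻¹ := inv_eq_left_inv <| by
    rw [diagonal_mul_diagonal, ← diagonal_one]
    exact congrArg diagonal (funext fun i => inv_mul_cancel₀ (hd i))
  rw [attn, hinv]
  congr 1
  ext i j
  simp [rowSoftmax, diagonal_mul, d, div_eq_inv_mul]

/-- Lipschitz bound in spectral norm for the self-attention module on a spectral-norm ball of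
radius R: ‖F(X) − F(X̃)‖ ≤ 5 R⁴ N D · ‖X − X̃‖. -/
theorem stmt_4 (N D : ℕ) (hN : 1 ≤ N) (hD : 1 ≤ D) (R : ℝ) (hR : 1 < R)
    (W WV : Matrix (Fin D) (Fin D) ℝ) (X Xt : Matrix (Fin N) (Fin D) ℝ)
    (hW : specNorm W ≤ R) (hWV : specNorm WV ≤ R)
    (hX : specNorm X ≤ R) (hXt : specNorm Xt ≤ R) :
    specNorm (attn W WV X - attn W WV Xt) ≤
      5 * R ^ 4 * (N : ℝ) * (D : ℝ) * specNorm (X - Xt) := by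
  have : Nonempty (Fin N) := ⟨⟨0, hN⟩⟩
  simp only [specNorm_eq_l2_opNorm] at *
  set δ := ‖X - Xt‖
  have hlogits : ∀ i j, |(X * W * Xᵀ) i j - (Xt * W * Xtᵀ) i j| ≤ 2 * R ^ 2 * δ := fun i j =>
    calc |(X * W * Xᵀ - Xt * W * Xtᵀ) i j| ≤ δ * ‖W‖ * (‖X‖ + ‖Xt‖) :=
          (abs_apply_le_l2_opNorm _ i j).trans (l2_opNorm_mul_mul_transpose_sub_le _ _ _)
      _ ≤ δ * R * (R + R) := by gcongr
      _ = 2 * R ^ 2 * δ := by ring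
  have hP := l2_opNorm_rowSoftmax_sub_le hlogits
  have hPt := l2_opNorm_rowSoftmax_le (Xt * W * Xtᵀ)
  rw [Fintype.card_fin] at hP hPt
  have hsqrt : √(N : ℝ) ≤ N * D := by
    calc √(N : ℝ) ≤ N := sqrt_le_self_iff.mpr (Or.inr (by exact_mod_cast hN))
      _ ≤ N * D := le_mul_of_one_le_right (by positivity) (by exact_mod_cast hD)
  set P := rowSoftmax (X * W * Xᵀ)
  set Pt := rowSoftmax (Xt * W * Xtᵀ)
  have hsplit : P * (X * WV) - Pt * (Xt * WV) = (P - Pt) * (X * WV) + Pt * ((X - Xt) * WV) := by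
    simp only [Matrix.sub_mul, Matrix.mul_sub]; abel
  rw [attn_eq_rowSoftmax_mul, attn_eq_rowSoftmax_mul, hsplit]
  calc _ ≤ ‖P - Pt‖ * (‖X‖ * ‖WV‖) + ‖Pt‖ * (δ * ‖WV‖) :=
        (norm_add_le _ _).trans <| add_le_add
          ((l2_opNorm_mul _ _).trans (by gcongr; exact l2_opNorm_mul _ _))
          ((l2_opNorm_mul _ _).trans (by gcongr; exact l2_opNorm_mul _ _))
    _ ≤ √N * (2 * (2 * R ^ 2 * δ)) * (R * R) + √N * (δ * R) := by gcongr
    _ = √N * δ * (4 * R ^ 4 + R) := by ring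
    _ ≤ (N * D) * δ * (5 * R ^ 4) := by gcongr; nlinarith [pow_le_pow_left₀ zero_le_one hR.le 3]
    _ = 5 * R ^ 4 * N * D * δ := by ring
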